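/- For 0 < δ ≤ 1/2 and N ∈ ℕ, the function h(w) = (1/(2δ))·(e^{2Nw} + (2δ−1))/(1 + (2δ−1)e^{2Nw}) + 1/(2δ) maps the left half-plane {Re(w) < 0} into the open disk of radius 1/(2δ) centered at 1/(2δ); in particular h is nonvanishing there. -/

import Mathlib

/-- h_N^δ(w) = (1/(2δ))·(e^{2Nw} + (2δ−1))/(1 + (2δ−1)e^{2Nw}) + 1/(2δ). -/
noncomputable def hMap (δ : ℝ) (N : ℕ) (w : ℂ) : ℂ :=
  (1 / (2 * δ)) * ((Complex.exp (2 * N * w) + (2 * δ - 1)) /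
    (1 + (2 * δ - 1) * Complex.exp (2 * N * w))) + 1 / (2 * δ)

theorem hMap_maps_into_disk (δ : ℝ) (hδ : 0 < δ) (hδ' : δ ≤ 1 / 2) (N : ℕ) (hN : 1 ≤ N)
    (w : ℂ) (hw : w.re < 0) :
    ‖hMap δ N w - 1 / (2 * δ)‖ < 1 / (2 * δ) ∧ hMap δ N w ≠ 0 := by
  have hδ2 : (0:ℝ) < 2 * δ := by linarith
  set z := Complex.exp (2 * (N:ℂ) * w) with hzdef
  set c : ℂ := 2 * (δ:ℂ) - 1 with hcdef
  -- |z| < 1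
  have hzabs : ‖z‖ < 1 := by
    rw [hzdef, Complex.norm_exp]
    have hre : ((2 * (N:ℂ) * w).re) = 2 * (N:ℝ) * w.re := by
      simp [Complex.mul_re]
    rw [hre]
    rw [Real.exp_lt_one_iff]
    have hN' : (1:ℝ) ≤ (N:ℝ) := by exact_mod_cast hN
    nlinarith
  have hsq : z.re ^ 2 + z.im ^ 2 < 1 := by
    have h1 : ‖z‖ ^ 2 < 1 := by
      nlinarith [norm_nonneg z]
    rw [Complex.sq_norm, Complex.normSq_apply] at h1
    nlinarith
  -- key inequality on abs
  have hlt : ‖z + c‖ < ‖1 + c * z‖ := by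
    apply lt_of_pow_lt_pow_left₀ 2 (norm_nonneg _)
    rw [Complex.sq_norm, Complex.sq_norm, Complex.normSq_apply, Complex.normSq_apply]
    simp only [hcdef, Complex.add_re, Complex.add_im, Complex.mul_re, Complex.mul_im,
      Complex.sub_re, Complex.sub_im, Complex.one_re, Complex.one_im, Complex.ofReal_re,
      Complex.ofReal_im, Complex.re_ofNat, Complex.im_ofNat]
    ring_nf
    nlinarith [mul_pos (show (0:ℝ) < 1-(2*δ-1)^2 by nlinarith) (show (0:ℝ) < 1-(z.re^2+z.im^2) by linarith)]
  have hden : (1 + c * z) ≠ 0 := by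
    intro h
    rw [h] at hlt
    simp at hlt
    exact absurd hlt (not_lt.mpr (norm_nonneg _))
  have habs_ratio : ‖(z + c) / (1 + c * z)‖ < 1 := by
    rw [norm_div, div_lt_one (norm_pos_iff.mpr hden)]
    · exact hlt
  have hdiff : hMap δ N w - 1 / (2 * δ) =
      (1 / (2 * (δ:ℂ))) * ((z + c) / (1 + c * z)) := by
    simp only [hMap, hzdef, hcdef]
    push_cast
    ring
  have habs : ‖hMap δ N w - 1 / (2 * δ)‖ < 1 / (2 * δ) := by
    rw [hdiff, norm_mul]
    have h2 : ‖1 / (2 * (δ:ℂ))‖ = 1 / (2 * δ) := by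
      rw [norm_div, norm_one]
      congr 1
      rw [show (2 * (δ:ℂ)) = ((2 * δ : ℝ) : ℂ) by push_cast; ring, Complex.norm_real, Real.norm_eq_abs,
        abs_of_pos hδ2]
    rw [h2]
    calc 1 / (2 * δ) * ‖(z + c) / (1 + c * z)‖
        < 1 / (2 * δ) * 1 := by
          apply mul_lt_mul_of_pos_left habs_ratio (by positivity)
      _ = 1 / (2 * δ) := mul_one _
  refine ⟨habs, ?_⟩
  intro h0
  rw [h0] at habs
  rw [zero_sub, norm_neg] at habs
  have : ‖1 / (2 * (δ:ℂ))‖ = 1 / (2 * δ) := by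
    rw [norm_div, norm_one]
    congr 1
    rw [show (2 * (δ:ℂ)) = ((2 * δ : ℝ) : ℂ) by push_cast; ring, Complex.norm_real, Real.norm_eq_abs,
      abs_of_pos hδ2]
  rw [this] at habs
  exact lt_irrefl _ habs
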